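/- arXiv:1701.07564 — 2 statements merged into one kernel-verified Lean document; each statement's English description precedes it below -/
import Mathlib

section
/- Let k be a field and let A = k⟨a,b⟩/(a², b², (ab)^m − (ba)^m, (ab)^m a, (ba)^m b) be the quotient of the free algebra on two generators a, b by these relations, for a fixed m ≥ 1. Then A is a free k-module of rank 4m. -/
open FreeAlgebra

/-- Relations of the torus-loop algebra `k⟨a,b⟩/(a², b², (ab)^m − (ba)^m, (ab)^m a, (ba)^m b)`,
where `a = ι k 0` and `b = ι k 1`. -/
inductive TorusRel (k : Type*) [Field k] (m : ℕ) :
    FreeAlgebra k (Fin 2) → FreeAlgebra k (Fin 2) → Prop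
  | asq : TorusRel k m (ι k 0 * ι k 0) 0
  | bsq : TorusRel k m (ι k 1 * ι k 1) 0
  | comm : TorusRel k m ((ι k 0 * ι k 1) ^ m) ((ι k 1 * ι k 0) ^ m)
  | soca : TorusRel k m ((ι k 0 * ι k 1) ^ m * ι k 0) 0
  | socb : TorusRel k m ((ι k 1 * ι k 0) ^ m * ι k 1) 0

/-!
Since `a² = b² = 0`, every nonzero monomial in `a, b` is an alternating word. By the remaining
relations the alternating words of length at most `2m`, with `(ab)ᵐ = (ba)ᵐ` counted once, span
the algebra, while longer ones vanish: `4m` spanning elements. They are linearly independent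
because the same rules for prepending a letter define an action of the algebra on the free
`k`-module over these normal words, in which each normal word sends the empty word to its own
basis vector.
-/

theorem Algebra.span_eq_top_of_one_mem_of_mul_mem {R A : Type*} [CommSemiring R] [Semiring A]
    [Algebra R A] {s t : Set A} (hs : Algebra.adjoin R s = ⊤) (h1 : 1 ∈ Submodule.span R t)
    (hmul : ∀ a ∈ s, ∀ y ∈ t, a * y ∈ Submodule.span R t) : Submodule.span R t = ⊤ := by
  have hstable : ∀ a ∈ Algebra.adjoin R s, ∀ y ∈ Submodule.span R t,
      a * y ∈ Submodule.span R t := by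
    intro a ha
    induction ha using Algebra.adjoin_induction with
    | mem a ha =>
      have : Submodule.span R t ≤ (Submodule.span R t).comap (LinearMap.mulLeft R a) :=
        Submodule.span_le.2 fun y hy => hmul a ha y hy
      exact fun y hy => this hy
    | algebraMap r =>
      intro y hy
      rw [← Algebra.smul_def]
      exact Submodule.smul_mem _ r hy
    | add a b _ _ iha ihb =>
      intro y hy
      rw [add_mul]
      exact add_mem (iha y hy) (ihb y hy)
    | mul a b _ _ iha ihb =>
      intro y hy
      rw [mul_assoc]
      exact iha _ (ihb y hy)
  refine Submodule.eq_top_iff'.2 fun a => ?_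
  simpa using hstable a (hs ▸ Algebra.mem_top) 1 h1

theorem RingQuot.adjoin_range_mkAlgHom_ι {R X : Type*} [CommSemiring R]
    (r : FreeAlgebra R X → FreeAlgebra R X → Prop) :
    Algebra.adjoin R (Set.range fun x => RingQuot.mkAlgHom R r (ι R x)) = ⊤ := by
  rw [Set.range_comp', ← AlgHom.map_adjoin, FreeAlgebra.adjoin_range_ι, Algebra.map_top,
    AlgHom.range_eq_top]
  exact RingQuot.mkAlgHom_surjective R r

namespace TorusAlgebra

variable (k : Type*) [Field k] (m : ℕ)

def gen (i : Fin 2) : RingQuot (TorusRel k m) :=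
  RingQuot.mkAlgHom k (TorusRel k m) (ι k i)

def altWord : Fin 2 → ℕ → RingQuot (TorusRel k m)
  | _, 0 => 1
  | i, ℓ + 1 => gen k m i * altWord (1 - i) ℓ

variable {k m}

theorem gen_mul_self (i : Fin 2) : gen k m i * gen k m i = 0 := by
  fin_cases i
  · simpa [gen] using RingQuot.mkAlgHom_rel k (TorusRel.asq (k := k) (m := m))
  · simpa [gen] using RingQuot.mkAlgHom_rel k (TorusRel.bsq (k := k) (m := m))

theorem altWord_add_two (i : Fin 2) (ℓ : ℕ) :
    altWord k m i (ℓ + 2) = gen k m i * gen k m (1 - i) * altWord k m i ℓ := by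
  rw [altWord, altWord, sub_sub_cancel, mul_assoc]

theorem altWord_two_mul (i : Fin 2) (n : ℕ) :
    altWord k m i (2 * n) = (gen k m i * gen k m (1 - i)) ^ n := by
  induction n with
  | zero => simp [altWord]
  | succ n ih => rw [Nat.mul_succ, altWord_add_two, ih, pow_succ']

theorem altWord_two_mul_add_one (i : Fin 2) (n : ℕ) :
    altWord k m i (2 * n + 1) = (gen k m i * gen k m (1 - i)) ^ n * gen k m i := by
  induction n with
  | zero => simp [altWord]
  | succ n ih =>
    rw [show 2 * (n + 1) + 1 = 2 * n + 1 + 2 by ring, altWord_add_two, ih, pow_succ']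
    simp only [mul_assoc]

theorem gen_mul_altWord (i j : Fin 2) (ℓ : ℕ) :
    gen k m i * altWord k m j ℓ = if j = i ∧ ℓ ≠ 0 then 0 else altWord k m i (ℓ + 1) := by
  rcases ℓ with _ | ℓ
  · simp [altWord]
  · by_cases hji : j = i
    · subst hji
      simp [altWord, ← mul_assoc, gen_mul_self]
    · have : j = 1 - i := by revert i j; decide
      rw [if_neg fun h => hji h.1, this]
      rfl

theorem altWord_two_mul_eq (i j : Fin 2) : altWord k m i (2 * m) = altWord k m j (2 * m) := by
  have hcomm := RingQuot.mkAlgHom_rel k (TorusRel.comm (k := k) (m := m))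
  simp only [map_pow, map_mul] at hcomm
  fin_cases i <;> fin_cases j <;> simp [altWord_two_mul, gen, hcomm]

theorem altWord_eq_zero (i : Fin 2) {ℓ : ℕ} (hℓ : 2 * m < ℓ) : altWord k m i ℓ = 0 := by
  induction ℓ, hℓ using Nat.le_induction generalizing i with
  | base =>
    have hsoca := RingQuot.mkAlgHom_rel k (TorusRel.soca (k := k) (m := m))
    have hsocb := RingQuot.mkAlgHom_rel k (TorusRel.socb (k := k) (m := m))
    simp only [map_pow, map_mul, map_zero] at hsoca hsocb
    fin_cases i <;> simp [altWord_two_mul_add_one, gen, hsoca, hsocb]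
  | succ ℓ _ ih => rw [altWord, ih, mul_zero]

/-- `alt i n` is the alternating word of length `n + 1` with first letter `i`, and `top` is
`(ab)ᵐ = (ba)ᵐ`. -/
inductive NormalWord (m : ℕ)
  | one
  | alt (i : Fin 2) (n : Fin (2 * m - 1))
  | top
  deriving DecidableEq, Fintype

theorem card_normalWord (hm : 1 ≤ m) : Fintype.card (NormalWord m) = 4 * m := by
  rw [← Fintype.card_congr (NormalWord.proxyTypeEquiv m)]
  simp
  omega

namespace NormalWord

def head : NormalWord m → Fin 2
  | alt i _ => i
  | _ => 0

def length : NormalWord m → ℕ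
  | one => 0
  | alt _ n => n + 1
  | top => 2 * m

variable (k) in
def elem (x : NormalWord m) : RingQuot (TorusRel k m) :=
  altWord k m x.head x.length

end NormalWord

theorem altWord_mem_span_elem (i : Fin 2) (ℓ : ℕ) :
    altWord k m i ℓ ∈ Submodule.span k (Set.range (NormalWord.elem k (m := m))) := by
  have hmem (x : NormalWord m) : x.elem k ∈ Submodule.span k (Set.range (NormalWord.elem k)) :=
    Submodule.subset_span (Set.mem_range_self x)
  rcases Nat.lt_or_ge (2 * m) ℓ with hlt | hle
  · rw [altWord_eq_zero i hlt]
    exact zero_mem _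
  rcases hle.eq_or_lt with heq | hlt
  · simpa [NormalWord.elem, NormalWord.head, NormalWord.length, heq, altWord_two_mul_eq i 0]
      using hmem .top
  rcases ℓ with _ | ℓ
  · exact hmem .one
  · exact hmem (.alt i ⟨ℓ, by omega⟩)

theorem span_elem_eq_top :
    Submodule.span k (Set.range (NormalWord.elem k (m := m))) = ⊤ := by
  refine Algebra.span_eq_top_of_one_mem_of_mul_mem
    (RingQuot.adjoin_range_mkAlgHom_ι (TorusRel k m)) (Submodule.subset_span ⟨.one, rfl⟩) ?_
  rintro _ ⟨i, rfl⟩ _ ⟨x, rfl⟩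
  change gen k m i * altWord k m x.head x.length ∈ _
  rw [gen_mul_altWord]
  split_ifs
  · exact zero_mem _
  · exact altWord_mem_span_elem i _

variable (k m) in
/-- The basis vector of the normal form of `altWord k m i ℓ`, zero once `ℓ > 2m`. -/
noncomputable def wordVec (i : Fin 2) (ℓ : ℕ) : NormalWord m →₀ k :=
  if ℓ = 0 then Finsupp.single .one 1
  else if h : ℓ < 2 * m then Finsupp.single (.alt i ⟨ℓ - 1, by omega⟩) 1
  else if ℓ = 2 * m then Finsupp.single .top 1
  else 0

theorem wordVec_head_length (hm : 1 ≤ m) (x : NormalWord m) :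
    wordVec k m x.head x.length = Finsupp.single x 1 := by
  rcases x with _ | ⟨i, n⟩ | _
  · simp [wordVec, NormalWord.length]
  · have hn := n.isLt
    simp [wordVec, NormalWord.head, NormalWord.length, show (n : ℕ) + 1 < 2 * m by omega]
  · simp [wordVec, NormalWord.length, show m ≠ 0 by omega]

theorem wordVec_eq_zero (i : Fin 2) {ℓ : ℕ} (hℓ : 2 * m < ℓ) : wordVec k m i ℓ = 0 := by
  simp [wordVec, show ℓ ≠ 0 by omega, show ¬ ℓ < 2 * m by omega, show ℓ ≠ 2 * m by omega]

theorem wordVec_add_two_mul (hm : 1 ≤ m) (i j : Fin 2) (ℓ : ℕ) :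
    wordVec k m i (ℓ + 2 * m) = wordVec k m j (ℓ + 2 * m) := by
  rcases ℓ with _ | ℓ
  · simp [wordVec, show m ≠ 0 by omega]
  · rw [wordVec_eq_zero i (by omega), wordVec_eq_zero j (by omega)]

variable (k m) in
noncomputable def prepend (i : Fin 2) : Module.End k (NormalWord m →₀ k) :=
  Finsupp.linearCombination k fun x =>
    if x.head = i ∧ x.length ≠ 0 then 0 else wordVec k m i (x.length + 1)

theorem prepend_wordVec (hm : 1 ≤ m) (i j : Fin 2) (ℓ : ℕ) :
    prepend k m i (wordVec k m j ℓ) =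
      if j = i ∧ ℓ ≠ 0 then 0 else wordVec k m i (ℓ + 1) := by
  have hsingle (x : NormalWord m) : prepend k m i (Finsupp.single x 1) =
      if x.head = i ∧ x.length ≠ 0 then 0 else wordVec k m i (x.length + 1) := by
    simp [prepend]
  have hvanish : wordVec k m i (2 * m + 1) = 0 := wordVec_eq_zero i (by omega)
  rcases Nat.lt_or_ge (2 * m) ℓ with hlt | hle
  · simp [wordVec_eq_zero _ hlt, wordVec_eq_zero i (show 2 * m < ℓ + 1 by omega)]
  rcases hle.eq_or_lt with rfl | hlt
  · have htop : wordVec k m j (2 * m) = Finsupp.single .top 1 := by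
      simp [wordVec, show m ≠ 0 by omega]
    simp [htop, hsingle, NormalWord.length, hvanish]
  rcases ℓ with _ | ℓ
  · simp [wordVec, hsingle, NormalWord.length]
  · have halt : wordVec k m j (ℓ + 1) = Finsupp.single (.alt j ⟨ℓ, by omega⟩) 1 := by
      simp [wordVec, hlt]
    simp [halt, hsingle, NormalWord.head, NormalWord.length]

theorem ext_wordVec (hm : 1 ≤ m) {f g : Module.End k (NormalWord m →₀ k)}
    (h : ∀ i ℓ, f (wordVec k m i ℓ) = g (wordVec k m i ℓ)) : f = g :=
  Finsupp.basisSingleOne.ext fun x => by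
    simpa [wordVec_head_length hm] using h x.head x.length

theorem prepend_mul_self (hm : 1 ≤ m) (i : Fin 2) : prepend k m i * prepend k m i = 0 :=
  ext_wordVec hm fun j ℓ => by
    rw [Module.End.mul_apply, prepend_wordVec hm]
    split_ifs <;> simp [prepend_wordVec hm]

theorem prepend_mul_prepend_pow_wordVec (hm : 1 ≤ m) {i j : Fin 2} (hij : i ≠ j) (n ℓ : ℕ) :
    ((prepend k m i * prepend k m j) ^ n) (wordVec k m i ℓ) = wordVec k m i (ℓ + 2 * n) := by
  induction n generalizing ℓ with
  | zero => rfl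
  | succ n ih =>
    rw [pow_succ, Module.End.mul_apply, Module.End.mul_apply, prepend_wordVec hm,
      if_neg fun h => hij h.1, prepend_wordVec hm, if_neg fun h => hij h.1.symm, ih]
    ring_nf

theorem prepend_mul_prepend_pow_eq (hm : 1 ≤ m) {i j : Fin 2} (hij : i ≠ j) (u : Fin 2)
    (ℓ : ℕ) :
    ((prepend k m i * prepend k m j) ^ m) (wordVec k m u ℓ) = wordVec k m i (ℓ + 2 * m) := by
  obtain ⟨n, rfl⟩ := Nat.exists_eq_add_of_le' hm
  rw [pow_succ, Module.End.mul_apply, Module.End.mul_apply, prepend_wordVec hm]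
  split_ifs with h
  · rw [map_zero, map_zero, wordVec_eq_zero i (by omega)]
  · rw [prepend_wordVec hm, if_neg fun h => hij h.1.symm, prepend_mul_prepend_pow_wordVec hm hij]
    ring_nf

theorem prepend_mul_prepend_pow_comm (hm : 1 ≤ m) :
    (prepend k m 0 * prepend k m 1) ^ m = (prepend k m 1 * prepend k m 0) ^ m :=
  ext_wordVec hm fun u ℓ => by
    rw [prepend_mul_prepend_pow_eq hm (by decide), prepend_mul_prepend_pow_eq hm (by decide),
      wordVec_add_two_mul hm]

theorem prepend_mul_prepend_pow_mul_prepend (hm : 1 ≤ m) {i j : Fin 2} (hij : i ≠ j) :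
    (prepend k m i * prepend k m j) ^ m * prepend k m i = 0 :=
  ext_wordVec hm fun u ℓ => by
    rw [Module.End.mul_apply, prepend_wordVec hm]
    split_ifs
    · simp
    · rw [prepend_mul_prepend_pow_eq hm hij, wordVec_eq_zero i (by omega), LinearMap.zero_apply]

variable (k) in
noncomputable def rep (hm : 1 ≤ m) :
    RingQuot (TorusRel k m) →ₐ[k] Module.End k (NormalWord m →₀ k) :=
  RingQuot.liftAlgHom k ⟨FreeAlgebra.lift k (prepend k m), fun x y h => by
    cases h with
    | asq => simpa using prepend_mul_self hm 0
    | bsq => simpa using prepend_mul_self hm 1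
    | comm => simpa using prepend_mul_prepend_pow_comm hm
    | soca => simpa using prepend_mul_prepend_pow_mul_prepend hm (i := 0) (j := 1) (by decide)
    | socb => simpa using prepend_mul_prepend_pow_mul_prepend hm (i := 1) (j := 0) (by decide)⟩

theorem rep_gen (hm : 1 ≤ m) (i : Fin 2) : rep k hm (gen k m i) = prepend k m i := by
  simp [rep, gen]

theorem rep_altWord (hm : 1 ≤ m) (i : Fin 2) (ℓ : ℕ) :
    rep k hm (altWord k m i ℓ) (Finsupp.single .one 1) = wordVec k m i ℓ := by
  induction ℓ generalizing i with
  | zero => simp [altWord, wordVec]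
  | succ ℓ ih =>
    have hne : 1 - i ≠ i := by revert i; decide
    rw [altWord, map_mul, Module.End.mul_apply, ih, rep_gen, prepend_wordVec hm,
      if_neg fun h => hne h.1]

theorem linearIndependent_elem (hm : 1 ≤ m) :
    LinearIndependent k (NormalWord.elem k (m := m)) := by
  let μ := LinearMap.applyₗ (Finsupp.single .one 1) ∘ₗ (rep k hm).toLinearMap
  have hμ : μ ∘ NormalWord.elem k = Finsupp.basisSingleOne := funext fun x => by
    simp [μ, NormalWord.elem, rep_altWord hm, wordVec_head_length hm]
  exact LinearIndependent.of_comp μ (hμ ▸ Finsupp.basisSingleOne.linearIndependent)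

end TorusAlgebra

/-- The torus-loop algebra is a free `k`-module of rank `4m`. -/
theorem stmt_0 (k : Type*) [Field k] (m : ℕ) (hm : 1 ≤ m) :
    Module.Free k (RingQuot (TorusRel k m)) ∧
      Module.finrank k (RingQuot (TorusRel k m)) = 4 * m := by
  open TorusAlgebra in
  let b := Module.Basis.mk (linearIndependent_elem hm) (span_elem_eq_top (k := k) (m := m)).ge
  exact ⟨.of_basis b, by rw [Module.finrank_eq_card_basis b, card_normalWord hm]⟩
end

section
/- In a Brauer graph algebra B over a field k associated to a ribbon graph Γ with multiplicities m_v at vertices v, the dimension of B equals Σ_v m_v d_v², where d_v is the valency of v (each loop counted twice). Verify this for the Brauer graph with a single vertex v of multiplicity m and a single loop edge: the algebra k⟨a,b⟩/(a² ,b², (ab)^m − (ba)^m, (ab)^m a, (ba)^m b) has dimension 4m = m · 2². -/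
/-!
Since `a² = b² = 0`, every monomial is zero or an alternating word, and the relations identify
the two alternating words of length `2m` and kill all longer ones. Hence `1`, the `2(2m - 1)`
nonempty alternating words of length `< 2m` and the socle word `(ab)^m` span the algebra.
Conversely, letting `a` and `b` act on these `4m` normal forms by prepending a letter (with
result `0` when the word stops being alternating or becomes too long) gives a representation
on `k^{4m}` satisfying the relations, and applying the normal forms to the vector of the empty
word yields the `4m` standard basis vectors, so the spanning family is independent.
-/

open FreeAlgebra

theorem Submodule.eq_top_of_one_mem_of_mul_mem {R A : Type*} [CommSemiring R] [Semiring A]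
    [Algebra R A] {s : Set A} (hs : Algebra.adjoin R s = ⊤) {S : Submodule R A} (h1 : 1 ∈ S)
    (hmul : ∀ a ∈ s, ∀ y ∈ S, a * y ∈ S) : S = ⊤ := by
  rw [eq_top_iff]
  rintro z -
  have hz : z ∈ Algebra.adjoin R s := hs ▸ Algebra.mem_top
  suffices ∀ y ∈ S, z * y ∈ S from mul_one z ▸ this 1 h1
  induction hz using Algebra.adjoin_induction with
  | mem a ha => exact hmul a ha
  | algebraMap r => exact fun y hy => (Algebra.smul_def r y).symm ▸ S.smul_mem r hy
  | add x y _ _ hx hy => exact fun w hw => (add_mul x y w).symm ▸ S.add_mem (hx w hw) (hy w hw)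
  | mul x y _ _ hx hy => exact fun w hw => (mul_assoc x y w).symm ▸ hx _ (hy w hw)

lemma fin_two_add_one_add_one (c : Fin 2) : c + 1 + 1 = c := by
  revert c; decide

section AltProd

variable {M N : Type*} [Monoid M] [Monoid N] (x : Fin 2 → M)

def altProd : ℕ → Fin 2 → M
  | 0, _ => 1
  | l + 1, c => x c * altProd l (c + 1)

@[simp] lemma altProd_zero (c : Fin 2) : altProd x 0 c = 1 := rfl

lemma altProd_succ (l : ℕ) (c : Fin 2) : altProd x (l + 1) c = x c * altProd x l (c + 1) := rfl

lemma altProd_two_mul (j : ℕ) (c : Fin 2) : altProd x (2 * j) c = (x c * x (c + 1)) ^ j := by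
  induction j generalizing c with
  | zero => simp
  | succ j ih =>
    rw [Nat.mul_succ, altProd_succ, altProd_succ, ih, fin_two_add_one_add_one, pow_succ',
      mul_assoc]

lemma altProd_two_mul_add_one (j : ℕ) (c : Fin 2) :
    altProd x (2 * j + 1) c = (x c * x (c + 1)) ^ j * x c := by
  rw [altProd_succ, altProd_two_mul, fin_two_add_one_add_one, mul_pow_mul]

lemma map_altProd {F : Type*} [FunLike F M N] [MonoidHomClass F M N] (f : F) (l : ℕ)
    (c : Fin 2) : f (altProd x l c) = altProd (f ∘ x) l c := by
  induction l generalizing c with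
  | zero => exact map_one f
  | succ l ih => rw [altProd_succ, map_mul, ih]; rfl

end AltProd

namespace Finsupp

variable (k : Type*) [Field k] {α : Type*}

noncomputable def lpmap (g : α → Option α) : (α →₀ k) →ₗ[k] (α →₀ k) :=
  lsum k fun i => (g i).elim 0 lsingle

noncomputable def optionSingle (o : Option α) (a : k) : α →₀ k :=
  o.elim 0 (single · a)

variable {k}

@[simp] lemma optionSingle_some (i : α) (a : k) :
    optionSingle k (Option.some i) a = single i a := rfl

lemma lpmap_optionSingle (g : α → Option α) (o : Option α) (a : k) :
    lpmap k g (optionSingle k o a) = optionSingle k (o.bind g) a := by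
  rcases o with _ | i
  · exact map_zero _
  · rw [optionSingle_some, lpmap, lsum_single, Option.bind_some]
    rcases g i <;> rfl

end Finsupp

namespace TorusRel

section Words

variable (m : ℕ)

/-- Normal forms of the nonzero alternating words: the empty word, the word `(c, l)` of length
`l + 1` starting with `c`, and the socle word of length `2 * m`. -/
abbrev Word := Unit ⊕ (Fin 2 × Fin (2 * m - 1)) ⊕ Unit

/-- The normal form of the alternating word of length `l` starting with `c`, or `none` if that
word vanishes. -/
def altWord (c : Fin 2) : ℕ → Option (Word m)
  | 0 => some (.inl ())
  | l + 1 =>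
    if h : l < 2 * m - 1 then some (.inr (.inl (c, ⟨l, h⟩)))
    else if l + 1 = 2 * m then some (.inr (.inr ()))
    else none

def prepend (x : Fin 2) : Word m → Option (Word m)
  | .inl () => altWord m x 1
  | .inr (.inl (c, l)) => if x = c then none else altWord m x (l + 2)
  | .inr (.inr ()) => none

variable {m}

lemma card_word (hm : 0 < m) : Fintype.card (Word m) = 4 * m := by
  simp only [Fintype.card_sum, Fintype.card_unit, Fintype.card_prod, Fintype.card_fin]
  omega

lemma altWord_eq_none {l : ℕ} (hl : 2 * m < l) (c : Fin 2) : altWord m c l = none := by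
  obtain ⟨l, rfl⟩ : ∃ l', l = l' + 1 := ⟨l - 1, by omega⟩
  simp only [altWord]
  rw [dif_neg (by omega), if_neg (by omega)]

lemma altWord_two_mul (hm : 0 < m) (c : Fin 2) :
    altWord m c (2 * m) = some (.inr (.inr ())) := by
  obtain ⟨l, hl⟩ : ∃ l, 2 * m = l + 1 := ⟨2 * m - 1, by omega⟩
  simp only [hl, altWord]
  rw [dif_neg (by omega)]
  simp

lemma exists_altWord_eq (hm : 0 < m) : ∀ i : Word m, ∃ c l, altWord m c l = some i
  | .inl () => ⟨0, 0, rfl⟩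
  | .inr (.inl (c, l)) => ⟨c, l + 1, dif_pos l.2⟩
  | .inr (.inr ()) => ⟨0, 2 * m, altWord_two_mul hm 0⟩

lemma altWord_bind_prepend (c x : Fin 2) (l : ℕ) :
    (altWord m c l).bind (prepend m x) =
      if l = 0 ∨ c = x + 1 then altWord m x (l + 1) else none := by
  have hc : c = x + 1 ↔ x ≠ c := by revert c x; decide
  rcases l with _ | l
  · rfl
  · simp only [altWord, hc]
    split_ifs <;> simp_all [prepend, altWord] <;> omega

lemma prepend_bind_prepend (x : Fin 2) (i : Word m) :
    (prepend m x i).bind (prepend m x) = none := by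
  have hx : x ≠ x + 1 := by revert x; decide
  rcases i with _ | ⟨c, l⟩ | _
  · exact (altWord_bind_prepend x x 1).trans (if_neg (by simp [hx]))
  · simp only [prepend]
    split_ifs
    · rfl
    · exact (altWord_bind_prepend x x _).trans (if_neg (by simp [hx]))
  · rfl

end Words

section Representation

variable (k : Type*) [Field k] (m : ℕ)

noncomputable def prependOp (x : Fin 2) : Module.End k (Word m →₀ k) :=
  Finsupp.lpmap k (prepend m x)

noncomputable def rep : FreeAlgebra k (Fin 2) →ₐ[k] Module.End k (Word m →₀ k) :=
  FreeAlgebra.lift k (prependOp k m)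

variable {k m}

open Finsupp in
lemma prependOp_ext (hm : 0 < m) {f g : Module.End k (Word m →₀ k)}
    (h : ∀ c l a, f (optionSingle k (altWord m c l) a) = g (optionSingle k (altWord m c l) a)) :
    f = g := by
  refine lhom_ext fun i a => ?_
  obtain ⟨c, l, hi⟩ := exists_altWord_eq hm i
  simpa [hi] using h c l a

lemma prependOp_mul_self (x : Fin 2) : prependOp k m x * prependOp k m x = 0 := by
  refine Finsupp.lhom_ext fun i a => ?_
  rw [Module.End.mul_apply, ← Finsupp.optionSingle_some, prependOp, Finsupp.lpmap_optionSingle,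
    Finsupp.lpmap_optionSingle, Option.bind_some, prepend_bind_prepend]
  rfl

/- The condition `c = d + j` says that the concatenation of the alternating words `(d, j)` and
`(c, l)` is again alternating. -/
open Finsupp Fin.NatCast in
lemma altProd_prependOp_apply {j : ℕ} (hj : j ≠ 0) (c d : Fin 2) (l : ℕ) (a : k) :
    altProd (prependOp k m) j d (optionSingle k (altWord m c l) a) =
      optionSingle k (if l = 0 ∨ c = d + (j : Fin 2) then altWord m d (j + l) else none) a := by
  obtain ⟨j, rfl⟩ := Nat.exists_eq_add_one_of_ne_zero hj
  clear hj
  induction j generalizing d with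
  | zero =>
    rw [altProd_succ, altProd_zero, mul_one, prependOp, lpmap_optionSingle,
      altWord_bind_prepend, Nat.cast_one, add_comm 1 l]
  | succ j ih =>
    have hcast : d + 1 + ((j + 1 : ℕ) : Fin 2) = d + ((j + 1 + 1 : ℕ) : Fin 2) := by
      push_cast; ac_rfl
    rw [altProd_succ, Module.End.mul_apply, ih, hcast]
    split_ifs
    · rw [prependOp, lpmap_optionSingle, altWord_bind_prepend, if_pos (Or.inr rfl),
        Nat.add_right_comm _ l]
    · exact map_zero _

lemma altProd_prependOp_of_two_mul_lt (hm : 0 < m) {j : ℕ} (hj : 2 * m < j) (d : Fin 2) :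
    altProd (prependOp k m) j d = 0 := by
  refine prependOp_ext hm fun c l a => ?_
  rw [altProd_prependOp_apply (by omega), altWord_eq_none (by omega), ite_self]
  rfl

lemma altProd_prependOp_two_mul (hm : 0 < m) (c d : Fin 2) :
    altProd (prependOp k m) (2 * m) c = altProd (prependOp k m) (2 * m) d := by
  refine prependOp_ext hm fun e l a => ?_
  rw [altProd_prependOp_apply (by omega), altProd_prependOp_apply (by omega)]
  rcases Nat.eq_zero_or_pos l with rfl | hl
  · simp [altWord_two_mul hm]
  · simp [altWord_eq_none (by omega : 2 * m < 2 * m + l)]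

lemma rep_respects (hm : 0 < m) ⦃x y : FreeAlgebra k (Fin 2)⦄ (h : TorusRel k m x y) :
    rep k m x = rep k m y := by
  have hsoc (c : Fin 2) :
      (prependOp k m c * prependOp k m (c + 1)) ^ m * prependOp k m c = 0 := by
    rw [← altProd_two_mul_add_one, altProd_prependOp_of_two_mul_lt hm (by omega)]
  cases h <;> simp only [rep, map_mul, map_pow, map_zero, lift_ι_apply]
  case asq => exact prependOp_mul_self 0
  case bsq => exact prependOp_mul_self 1
  case comm =>
    exact (altProd_two_mul _ m 0).symm.trans
      ((altProd_prependOp_two_mul hm 0 1).trans (altProd_two_mul _ m 1))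
  case soca => exact hsoc 0
  case socb => exact hsoc 1

end Representation

section Quotient

variable (k : Type*) [Field k] (m : ℕ)

noncomputable def gen (x : Fin 2) : RingQuot (TorusRel k m) :=
  RingQuot.mkAlgHom k (TorusRel k m) (ι k x)

noncomputable def wordElem : Word m → RingQuot (TorusRel k m)
  | .inl () => 1
  | .inr (.inl (c, l)) => altProd (gen k m) (l + 1) c
  | .inr (.inr ()) => altProd (gen k m) (2 * m) 0

noncomputable def quotRep (hm : 0 < m) :
    RingQuot (TorusRel k m) →ₐ[k] Module.End k (Word m →₀ k) :=
  RingQuot.liftAlgHom k ⟨rep k m, rep_respects hm⟩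

variable {k m}

lemma gen_mul_self (x : Fin 2) : gen k m x * gen k m x = 0 := by
  fin_cases x
  · simpa [gen] using RingQuot.mkAlgHom_rel k (asq (k := k) (m := m))
  · simpa [gen] using RingQuot.mkAlgHom_rel k (bsq (k := k) (m := m))

lemma altProd_gen_two_mul (c : Fin 2) :
    altProd (gen k m) (2 * m) c = altProd (gen k m) (2 * m) 0 := by
  fin_cases c
  · rfl
  · rw [altProd_two_mul, altProd_two_mul]
    simpa [gen] using (RingQuot.mkAlgHom_rel k (comm (k := k) (m := m))).symm

lemma altProd_gen_two_mul_add_one (c : Fin 2) : altProd (gen k m) (2 * m + 1) c = 0 := by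
  rw [altProd_two_mul_add_one]
  fin_cases c
  · simpa [gen] using RingQuot.mkAlgHom_rel k (soca (k := k) (m := m))
  · simpa [gen] using RingQuot.mkAlgHom_rel k (socb (k := k) (m := m))

lemma altProd_gen_of_two_mul_lt {l : ℕ} (hl : 2 * m < l) (c : Fin 2) :
    altProd (gen k m) l c = 0 := by
  induction l, hl using Nat.le_induction generalizing c with
  | base => exact altProd_gen_two_mul_add_one c
  | succ l _ ih => rw [altProd_succ, ih, mul_zero]

lemma gen_mul_altProd (x c : Fin 2) (l : ℕ) :
    gen k m x * altProd (gen k m) l c =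
      if l = 0 ∨ c = x + 1 then altProd (gen k m) (l + 1) x else 0 := by
  rcases l with _ | l
  · simp [altProd_succ]
  · by_cases h : c = x + 1
    · rw [if_pos (Or.inr h), h]
      rfl
    · have hc : c = x := by revert c x; decide
      rw [if_neg (by simp [h]), altProd_succ, ← mul_assoc, hc, gen_mul_self, zero_mul]

lemma altProd_gen_eq_elim (l : ℕ) (c : Fin 2) :
    altProd (gen k m) l c = (altWord m c l).elim 0 (wordElem k m) := by
  rcases l with _ | l
  · rfl
  · simp only [altWord]
    split_ifs with h₁ h₂
    · rfl
    · rw [h₂]; exact altProd_gen_two_mul c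
    · exact altProd_gen_of_two_mul_lt (by omega) c

lemma wordElem_eq_altProd {c : Fin 2} {l : ℕ} {i : Word m} (h : altWord m c l = some i) :
    wordElem k m i = altProd (gen k m) l c := by
  rw [altProd_gen_eq_elim, h]
  rfl

lemma span_range_wordElem (hm : 0 < m) :
    Submodule.span k (Set.range (wordElem k m)) = ⊤ := by
  set S := Submodule.span k (Set.range (wordElem k m))
  have hmem (o : Option (Word m)) : o.elim 0 (wordElem k m) ∈ S := by
    rcases o with _ | i
    · exact S.zero_mem
    · exact Submodule.subset_span ⟨i, rfl⟩
  refine Submodule.eq_top_of_one_mem_of_mul_mem (RingQuot.adjoin_range_mkAlgHom_ι _)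
    (hmem (some (.inl ()))) ?_
  rintro _ ⟨x, rfl⟩
  suffices S ≤ S.comap (LinearMap.mulLeft k (gen k m x)) from this
  refine Submodule.span_le.mpr ?_
  rintro _ ⟨i, rfl⟩
  obtain ⟨c, l, hi⟩ := exists_altWord_eq hm i
  change gen k m x * wordElem k m i ∈ S
  rw [wordElem_eq_altProd hi, gen_mul_altProd]
  split_ifs
  · rw [altProd_gen_eq_elim]
    exact hmem _
  · exact S.zero_mem

lemma quotRep_altProd_apply (hm : 0 < m) (l : ℕ) (c : Fin 2) :
    quotRep k m hm (altProd (gen k m) l c) (Finsupp.single (.inl ()) 1) =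
      Finsupp.optionSingle k (altWord m c l) 1 := by
  have hgen : quotRep k m hm ∘ gen k m = prependOp k m := by
    funext x
    simp [quotRep, gen, rep]
  rw [map_altProd, hgen]
  rcases Nat.eq_zero_or_pos l with rfl | hl
  · rfl
  · exact (altProd_prependOp_apply hl.ne' c c 0 1).trans (by rw [if_pos (Or.inl rfl), add_zero])

lemma linearIndependent_wordElem (hm : 0 < m) : LinearIndependent k (wordElem k m) := by
  refine LinearIndependent.of_comp
    ((LinearMap.applyₗ (Finsupp.single (.inl ()) 1)).comp (quotRep k m hm).toLinearMap) ?_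
  convert (Finsupp.basisSingleOne (R := k) (ι := Word m)).linearIndependent
  funext i
  obtain ⟨c, l, hi⟩ := exists_altWord_eq hm i
  simp [wordElem_eq_altProd hi, quotRep_altProd_apply, hi]

end Quotient

end TorusRel

/-- Specialization of the rank formula `dim B = Σ_v m_v d_v²` for Brauer graph algebras to
the Brauer graph with a single vertex of multiplicity `m` and one loop edge (valency
`d = 2`): the algebra has dimension `m ⋅ 2²`. -/
theorem stmt_7 (k : Type*) [Field k] (m : ℕ) (hm : 1 ≤ m) :
    Module.finrank k (RingQuot (TorusRel k m)) = m * 2 ^ 2 := by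
  let b := Module.Basis.mk (TorusRel.linearIndependent_wordElem hm)
    (TorusRel.span_range_wordElem (k := k) hm).ge
  rw [Module.finrank_eq_card_basis b, TorusRel.card_word hm]
  ring
end
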